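/- arXiv:1106.5626 — 7 statements merged into one kernel-verified Lean document; each statement's English description precedes it below -/
import Mathlib

section
/- Let n ≥ 1 and let L ∈ ℂ^{n×n} be a symmetric matrix (L^T = L) whose kernel is exactly the span of the all-ones vector 1 ∈ ℂ^n. Fix an index 0 and let 1_0 ∈ ℂ^n be the corresponding standard basis vector. Then there exists a unique symmetric matrix X ∈ ℂ^{n×n} such that X L = I − 1 1_0^T and X 1_0 = 0. -/
open Matrix

/-!
Bordering `L` by `1₀ 1₀ᵀ` makes it invertible: `B = L + 1₀ 1₀ᵀ` has trivial kernel because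
`1ᵀ L = 0` forces `x₀ = 0` for any `x` with `B x = 0`, and then `x ∈ ker L = span 1`. Since
`B 1 = 1₀`, the matrix `X = B⁻¹ - 1 1ᵀ` satisfies `X L = B⁻¹ (B - 1₀ 1₀ᵀ) = I - 1 1₀ᵀ` and
`X 1₀ = 0`. Uniqueness: the rows of the difference of two solutions lie in the left kernel of `L`,
which is `span 1` by symmetry, and vanish at `0`.
-/

namespace Matrix

variable {ι K : Type*} [Fintype ι] [DecidableEq ι] [Field K]

theorem isUnit_det_add_vecMulVec {L : Matrix ι ι K} {u w a b : ι → K}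
    (hker : ∀ x, L *ᵥ x = 0 → ∃ c : K, x = c • u) (hw : w ᵥ* L = 0)
    (hwa : w ⬝ᵥ a ≠ 0) (hbu : b ⬝ᵥ u ≠ 0) : IsUnit (L + vecMulVec a b).det := by
  refine isUnit_iff_ne_zero.mpr fun hdet => ?_
  obtain ⟨x, hx, hBx⟩ := exists_mulVec_eq_zero_iff.mpr hdet
  have hLx : L *ᵥ x = -((b ⬝ᵥ x) • a) := by
    rw [add_mulVec, vecMulVec_mulVec, op_smul_eq_smul] at hBx
    exact eq_neg_of_add_eq_zero_left hBx
  have hbx : b ⬝ᵥ x = 0 := by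
    have h : w ⬝ᵥ (L *ᵥ x) = 0 := by rw [dotProduct_mulVec, hw, zero_dotProduct]
    rw [hLx, dotProduct_neg, dotProduct_smul, smul_eq_mul, neg_eq_zero, mul_eq_zero] at h
    exact h.resolve_right hwa
  obtain ⟨c, rfl⟩ := hker x (by simp [hLx, hbx])
  rw [dotProduct_smul, smul_eq_mul, mul_eq_zero] at hbx
  exact hx (by simp [hbx.resolve_right hbu])

theorem eq_zero_of_mul_eq_zero_of_mulVec_single_eq_zero {L D : Matrix ι ι K} {i : ι}
    (hker : ∀ x, x ᵥ* L = 0 → ∃ c : K, x = c • 1) (hDL : D * L = 0)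
    (hDi : D *ᵥ Pi.single i 1 = 0) : D = 0 := by
  ext j k
  obtain ⟨c, hc⟩ := hker (D j) (by rw [← mul_apply_eq_vecMul, hDL]; rfl)
  have hc0 : c = 0 := by
    have h := congrFun hDi j
    rw [mulVec_single_one, col_apply, hc] at h
    simpa using h
  simp [hc, hc0]

noncomputable def greenMatrix (L : Matrix ι ι K) (i : ι) : Matrix ι ι K :=
  (L + vecMulVec (Pi.single i 1) (Pi.single i 1))⁻¹ - vecMulVec 1 1

section greenMatrix

variable {L : Matrix ι ι K} (i : ι)

theorem transpose_greenMatrix (hL : Lᵀ = L) : (greenMatrix L i)ᵀ = greenMatrix L i := by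
  rw [greenMatrix, transpose_sub, transpose_nonsing_inv, transpose_add, hL]
  simp only [transpose_vecMulVec]

variable (hker : ∀ x, L *ᵥ x = 0 → ∃ c : K, x = c • 1) (h1L : 1 ᵥ* L = 0)
include hker h1L

theorem isUnit_det_add_vecMulVec_single :
    IsUnit (L + vecMulVec (Pi.single i 1) (Pi.single i 1)).det :=
  isUnit_det_add_vecMulVec hker h1L (by simp) (by simp)

variable (hL1 : L *ᵥ 1 = 0)
include hL1

theorem inv_add_vecMulVec_single_mulVec_single :
    (L + vecMulVec (Pi.single i 1) (Pi.single i 1))⁻¹ *ᵥ Pi.single i 1 = 1 := by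
  set B := L + vecMulVec (Pi.single i 1) (Pi.single i 1) with hB
  have hB1 : B *ᵥ 1 = Pi.single i 1 := by simp [hB, add_mulVec, vecMulVec_mulVec, hL1]
  rw [← hB1, mulVec_mulVec, nonsing_inv_mul _ (isUnit_det_add_vecMulVec_single i hker h1L),
    one_mulVec]

theorem greenMatrix_mul : greenMatrix L i * L = 1 - vecMulVec 1 (Pi.single i 1) := by
  set B := L + vecMulVec (Pi.single i 1) (Pi.single i 1) with hB
  calc greenMatrix L i * L = B⁻¹ * L - vecMulVec 1 (1 ᵥ* L) := by
        rw [greenMatrix, sub_mul, vecMulVec_mul]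
    _ = B⁻¹ * (B - vecMulVec (Pi.single i 1) (Pi.single i 1)) := by
        rw [h1L, vecMulVec_zero, sub_zero, hB, add_sub_cancel_right]
    _ = 1 - vecMulVec 1 (Pi.single i 1) := by
        rw [mul_sub, nonsing_inv_mul _ (isUnit_det_add_vecMulVec_single i hker h1L),
          mul_vecMulVec, inv_add_vecMulVec_single_mulVec_single i hker h1L hL1]

theorem greenMatrix_mulVec_single : greenMatrix L i *ᵥ Pi.single i 1 = 0 := by
  rw [greenMatrix, sub_mulVec, inv_add_vecMulVec_single_mulVec_single i hker h1L hL1,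
    vecMulVec_mulVec, dotProduct_single_one, Pi.one_apply, MulOpposite.op_one, one_smul, sub_self]

end greenMatrix

end Matrix

theorem exists_unique_green_matrix_general (n : ℕ) (v0 : Fin n)
    (L : Matrix (Fin n) (Fin n) ℂ) (hLsym : Lᵀ = L)
    (hker : ∀ x : Fin n → ℂ, L.mulVec x = 0 ↔ ∃ c : ℂ, x = fun _ => c) :
    ∃! X : Matrix (Fin n) (Fin n) ℂ,
      Xᵀ = X ∧
      X * L = 1 - Matrix.vecMulVec (fun _ => (1 : ℂ)) (Pi.single v0 1) ∧
      X.mulVec (Pi.single v0 1) = 0 := by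
  have hker' : ∀ x, L *ᵥ x = 0 → ∃ c : ℂ, x = c • 1 := fun x hx => by
    obtain ⟨c, rfl⟩ := (hker x).mp hx
    exact ⟨c, by ext; simp⟩
  have hleft : ∀ x, x ᵥ* L = 0 → ∃ c : ℂ, x = c • 1 := fun x hx =>
    hker' x (by rwa [← vecMul_transpose, hLsym])
  have hL1 : L *ᵥ 1 = 0 := (hker 1).mpr ⟨1, rfl⟩
  have h1L : 1 ᵥ* L = 0 := by rw [← hLsym, vecMul_transpose, hL1]
  refine ⟨greenMatrix L v0, ⟨transpose_greenMatrix v0 hLsym,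
    greenMatrix_mul v0 hker' h1L hL1, greenMatrix_mulVec_single v0 hker' h1L hL1⟩, ?_⟩
  rintro Y ⟨-, hYL, hYv0⟩
  refine sub_eq_zero.mp (eq_zero_of_mul_eq_zero_of_mulVec_single_eq_zero (i := v0) hleft ?_ ?_)
  · rw [sub_mul, hYL, greenMatrix_mul v0 hker' h1L hL1]
    exact sub_self _
  · rw [sub_mulVec, hYv0, greenMatrix_mulVec_single v0 hker' h1L hL1, sub_self]

/-- For a symmetric complex matrix `L` whose kernel is exactly the span of the
all-ones vector, there exists a unique symmetric matrix `X` with `X * L = I - 1 1₀ᵀ` and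
`X 1₀ = 0`. -/
theorem exists_unique_green_matrix (n : ℕ) (hn : 1 ≤ n) (v0 : Fin n)
    (L : Matrix (Fin n) (Fin n) ℂ) (hLsym : Lᵀ = L)
    (hker : ∀ x : Fin n → ℂ, L.mulVec x = 0 ↔ ∃ c : ℂ, x = fun _ => c) :
    ∃! X : Matrix (Fin n) (Fin n) ℂ,
      Xᵀ = X ∧
      X * L = 1 - Matrix.vecMulVec (fun _ => (1 : ℂ)) (Pi.single v0 1) ∧
      X.mulVec (Pi.single v0 1) = 0 :=
  exists_unique_green_matrix_general n v0 L hLsym hker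
end

section
/- Let n ≥ 1 and let L ∈ ℂ^{n×n} be a symmetric matrix (L^T = L) whose kernel is exactly the span of the all-ones vector 1 ∈ ℂ^n, and let X ∈ ℂ^{n×n} be a symmetric matrix satisfying X L = I − 1 1_0^T and X 1_0 = 0. Then the (n+1)×(n+1) block matrix [[L, 1_0],[1_0^T, 0]] is invertible and its inverse equals [[X, 1],[1^T, 0]]. -/
open Matrix

/-- If `X` is the symmetric matrix with `X L = I − 1 1₀ᵀ` and `X 1₀ = 0`, where
`L` is symmetric with kernel exactly the span of the all-ones vector, then the bordered matrix
`[[L, 1₀],[1₀ᵀ, 0]]` is invertible with inverse `[[X, 1],[1ᵀ, 0]]`. -/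
theorem bordered_matrix_inverse (n : ℕ) (hn : 1 ≤ n) (v0 : Fin n)
    (L X : Matrix (Fin n) (Fin n) ℂ) (hLsym : Lᵀ = L)
    (hker : ∀ x : Fin n → ℂ, L.mulVec x = 0 ↔ ∃ c : ℂ, x = fun _ => c)
    (hXsym : Xᵀ = X)
    (hXL : X * L = 1 - Matrix.vecMulVec (fun _ => (1 : ℂ)) (Pi.single v0 1))
    (hX0 : X.mulVec (Pi.single v0 1) = 0) :
    let B : Matrix (Fin n ⊕ Unit) (Fin n ⊕ Unit) ℂ :=
      Matrix.fromBlocks L (Matrix.of fun i (_ : Unit) => (Pi.single v0 1 : Fin n → ℂ) i)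
        (Matrix.of fun (_ : Unit) j => (Pi.single v0 1 : Fin n → ℂ) j) 0
    let Binv : Matrix (Fin n ⊕ Unit) (Fin n ⊕ Unit) ℂ :=
      Matrix.fromBlocks X (Matrix.of fun _ (_ : Unit) => (1 : ℂ))
        (Matrix.of fun (_ : Unit) _ => (1 : ℂ)) 0
    IsUnit B ∧ B * Binv = 1 ∧ Binv * B = 1 := by
  intro B Binv
  have hL1 : L.mulVec (fun _ => (1:ℂ)) = 0 := (hker _).mpr ⟨1, rfl⟩
  have hLX : L * X = 1 - Matrix.vecMulVec (Pi.single v0 1) (fun _ => (1:ℂ)) := by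
    have := congrArg Matrix.transpose hXL
    rw [Matrix.transpose_mul, hLsym, hXsym, Matrix.transpose_sub, Matrix.transpose_one] at this
    rw [this]
    congr 1
    ext i j
    simp [Matrix.vecMulVec_apply, mul_comm]
  have heX : Matrix.vecMul (Pi.single v0 1) X = 0 := by
    rw [← hXsym, Matrix.vecMul_transpose]; exact hX0
  have key1 : B * Binv = 1 := by
    ext i j
    rcases i with i | i <;> rcases j with j | j
    · simp [B, Binv, Matrix.mul_apply, Fintype.sum_sum_type, Matrix.fromBlocks]
      have := congrFun (congrFun hLX i) j
      simp [Matrix.mul_apply, Matrix.vecMulVec_apply, sub_eq_iff_eq_add] at this ⊢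
      rw [this]; simp [Matrix.one_apply]
    · have := congrFun hL1 i
      simp [B, Binv, Matrix.mul_apply, Fintype.sum_sum_type, Matrix.fromBlocks,
        Matrix.mulVec, dotProduct] at this ⊢
      simpa using this
    · have := congrFun heX j
      simp [B, Binv, Matrix.mul_apply, Fintype.sum_sum_type, Matrix.fromBlocks,
        Matrix.vecMul, dotProduct] at this ⊢
      simpa using this
    · simp [B, Binv, Matrix.mul_apply, Fintype.sum_sum_type, Matrix.fromBlocks,
        Matrix.one_apply, Pi.single_apply]
  have key2 : Binv * B = 1 := by
    ext i j
    rcases i with i | i <;> rcases j with j | j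
    · have := congrFun (congrFun hXL i) j
      simp [B, Binv, Matrix.mul_apply, Fintype.sum_sum_type, Matrix.fromBlocks,
        Matrix.vecMulVec_apply, sub_eq_iff_eq_add] at this ⊢
      rw [this]; simp [Matrix.one_apply]
    · have := congrFun hX0 i
      simp [B, Binv, Matrix.mul_apply, Fintype.sum_sum_type, Matrix.fromBlocks,
        Matrix.mulVec, dotProduct] at this ⊢
      simpa using this
    · have h1L : Matrix.vecMul (fun _ => (1:ℂ)) L = 0 := by
        rw [← Matrix.mulVec_transpose, hLsym]; exact hL1
      have := congrFun h1L j
      simp [B, Binv, Matrix.mul_apply, Fintype.sum_sum_type, Matrix.fromBlocks,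
        Matrix.vecMul, dotProduct] at this ⊢
      simpa using this
    · simp [B, Binv, Matrix.mul_apply, Fintype.sum_sum_type, Matrix.fromBlocks,
        Matrix.one_apply, Pi.single_apply]
  exact ⟨⟨⟨B, Binv, key1, key2⟩, rfl⟩, key1, key2⟩
end

section
/- Let n ≥ 1 with index set V = {0, 1, …, n−1}, let X ∈ ℂ^{n×n} be symmetric with X 1_0 = 0, let s ∈ ℂ^n satisfy 1^T s = 0, and let η_v ∈ ℝ be given for every v ≠ 0. Then there exist ε_0 > 0, a constant K > 0, and continuous functions δ, λ : [0, ε_0) → ℂ^n with δ(0) = 0, λ(0) = 0, ‖δ(ε)‖ ≤ K ε and ‖λ(ε)‖ ≤ K ε for all ε ∈ [0, ε_0), such that for every ε ∈ (0, ε_0) the vectors i(ε) := ε( s̄ + δ(ε) ) and u(ε) := ε^{−1} 1 + ε( X s̄ + λ(ε) ) satisfy: (a) u(ε) = X i(ε) + ε^{−1} 1; (b) 1^T i(ε) = 0; (c) u_v(ε) · conj(i_v(ε)) = s_v · |ε u_v(ε)|^{η_v} for every v ≠ 0. Equivalently, writing U_N := 1/ε, the power flow equations admit solutions i_v = s̄_v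 / U_N + c_v(U_N)/U_N² and u_v = U_N + [X s̄]_v / U_N + d_v(U_N)/U_N² with c_v(U_N), d_v(U_N) bounded as U_N → ∞. -/
open Matrix
open Set Metric Filter Topology Function
open scoped NNReal

/-!
Put `i = ε (s̄ + δ)` and `u = ε⁻¹ 1 + ε X (s̄ + δ)`, so that (a) holds identically and
`ε u = 1 + z` with `z = ε² X (s̄ + δ)`. At a node `v ≠ v0`, (c) then says
`conj δ_v = s_v (|1 + z_v|^η_v / (1 + z_v) - 1)`, while the slack node `v0` takes whatever
value makes `Σ δ = 0`, which is (b) because `Σ s = 0`. Hence `δ` is a fixed point of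
`δ ↦ H (ε² X (s̄ + δ))` for a map `H` that is smooth near `0` with `H 0 = 0`. Being Lipschitz
near `0`, `H` makes this, for small `t = ε²`, a `1/2`-contraction of the unit ball that moves `0`
by `O(t)`; its fixed point is `O(t)` and, as the fixed point of a uniform contraction, depends
Lipschitz-continuously on `t`.
-/

theorem ContractingWith.lipschitzWith_fixedPoint {α P : Type*} [MetricSpace α] [Nonempty α]
    [CompleteSpace α] [PseudoMetricSpace P] {K C : ℝ≥0} {f : P → α → α}
    (hf : ∀ p, ContractingWith K (f p)) (hC : ∀ x, LipschitzWith C (f · x)) :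
    LipschitzWith (C / (1 - K)) fun p => fixedPoint (f p) (hf p) := by
  refine LipschitzWith.of_dist_le_mul fun p q => ?_
  calc dist (fixedPoint (f p) (hf p)) (fixedPoint (f q) (hf q))
      ≤ C * dist p q / (1 - K) :=
        (hf p).fixedPoint_lipschitz_in_map (hf q) fun x => (hC x).dist_le_mul p q
    _ = (C / (1 - K) : ℝ≥0) * dist p q := by
        rw [NNReal.coe_div, NNReal.coe_sub (hf p).1.le, NNReal.coe_one]; ring

theorem exists_lipschitzWith_isFixedPt_of_mapsTo {α P : Type*} [MetricSpace α] [CompleteSpace α]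
    [PseudoMetricSpace P] {S : Set α} (hS : IsClosed S) (hS₀ : S.Nonempty) {K C : ℝ≥0}
    (hK : K < 1) {F : P → α → α} (hmaps : ∀ p, MapsTo (F p) S S)
    (hF : ∀ p, LipschitzOnWith K (F p) S) (hC : ∀ x ∈ S, LipschitzWith C (F · x)) :
    ∃ x : P → α, LipschitzWith (C / (1 - K)) x ∧ ∀ p, x p ∈ S ∧ IsFixedPt (F p) (x p) := by
  have := hS.completeSpace_coe
  have := hS₀.to_subtype
  have hc : ∀ p, ContractingWith K ((hmaps p).restrict (F p) S S) :=
    fun p => ⟨hK, (hF p).mapsToRestrict (hmaps p)⟩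
  have hC' : ∀ x : S, LipschitzWith C fun p => (hmaps p).restrict (F p) S S x :=
    fun x => (hC x x.2).subtype_mk _
  refine ⟨fun p => ContractingWith.fixedPoint (α := S) _ (hc p),
    by simpa [comp_def] using
      (LipschitzWith.subtype_val S).comp (ContractingWith.lipschitzWith_fixedPoint hc hC'),
    fun p => ⟨Subtype.mem _, congrArg Subtype.val ((hc p).fixedPoint_isFixedPt)⟩⟩

section Perturbation

variable {E : Type*} [NormedAddCommGroup E] [NormedSpace ℝ E]

theorem norm_smul_apply_sub_smul_apply_le (A : E →L[ℝ] E) (b : E) {t t' : ℝ} (ht' : 0 ≤ t')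
    {d d' : E} (hd : ‖d‖ ≤ 1) :
    ‖t • A (b + d) - t' • A (b + d')‖ ≤
      |t - t'| * (‖A‖ * (‖b‖ + 1)) + t' * (‖A‖ * ‖d - d'‖) := by
  have hsplit : t • A (b + d) - t' • A (b + d') = (t - t') • A (b + d) + t' • A (d - d') := by
    simp only [map_add, map_sub, sub_smul, smul_sub, smul_add]; abel
  rw [hsplit]
  refine (norm_add_le _ _).trans (add_le_add ?_ ?_) <;> rw [norm_smul, Real.norm_eq_abs]
  · gcongr
    exact (A.le_opNorm _).trans (by gcongr; exact (norm_add_le _ _).trans (by gcongr))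
  · rw [abs_of_nonneg ht']
    gcongr
    exact A.le_opNorm _

theorem norm_smul_apply_le (A : E →L[ℝ] E) (b : E) {t : ℝ} (ht : 0 ≤ t) {d : E} (hd : ‖d‖ ≤ 1) :
    ‖t • A (b + d)‖ ≤ t * (‖A‖ * (‖b‖ + 1)) := by
  simpa [abs_of_nonneg ht] using norm_smul_apply_sub_smul_apply_le A b le_rfl (t := t) (d' := d) hd

variable {H : E → E} {L : ℝ≥0} {r : ℝ}

theorem LipschitzOnWith.dist_comp_smul_le (hH : LipschitzOnWith L H (closedBall 0 r))
    (A : E →L[ℝ] E) (b : E) {t t' : ℝ} (ht : 0 ≤ t) (ht' : 0 ≤ t')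
    (htr : t * (‖A‖ * (‖b‖ + 1)) ≤ r) (htr' : t' * (‖A‖ * (‖b‖ + 1)) ≤ r) {d d' : E}
    (hd : ‖d‖ ≤ 1) (hd' : ‖d'‖ ≤ 1) :
    dist (H (t • A (b + d))) (H (t' • A (b + d'))) ≤
      L * (|t - t'| * (‖A‖ * (‖b‖ + 1)) + t' * (‖A‖ * ‖d - d'‖)) := by
  have hmem : ∀ {t d}, 0 ≤ t → t * (‖A‖ * (‖b‖ + 1)) ≤ r → ‖d‖ ≤ 1 →
      t • A (b + d) ∈ closedBall 0 r := fun ht htr hd =>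
    mem_closedBall_zero_iff.2 ((norm_smul_apply_le A b ht hd).trans htr)
  refine (hH.dist_le_mul _ (hmem ht htr hd) _ (hmem ht' htr' hd')).trans ?_
  rw [dist_eq_norm]
  gcongr
  exact norm_smul_apply_sub_smul_apply_le A b ht' hd

variable [CompleteSpace E]

theorem LipschitzOnWith.exists_continuousOn_eq_comp_smul_of_closedBall
    (hH : LipschitzOnWith L H (closedBall 0 r)) (hH0 : H 0 = 0) (A : E →L[ℝ] E) (b : E)
    {t0 : ℝ} (ht0 : 0 ≤ t0) (hr : t0 * (‖A‖ * (‖b‖ + 1)) ≤ r)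
    (hmaps : L * (t0 * (‖A‖ * (‖b‖ + 1))) ≤ 1) (hcontr : L * (t0 * ‖A‖) ≤ 1 / 2) :
    ∃ δ : ℝ → E, ContinuousOn δ (Icc 0 t0) ∧ ∀ t ∈ Icc 0 t0,
      ‖δ t‖ ≤ L * (‖A‖ * (‖b‖ + 1)) * t ∧ ‖t • A (b + δ t)‖ ≤ r ∧ δ t = H (t • A (b + δ t)) := by
  have htr : ∀ t ∈ Icc 0 t0, t * (‖A‖ * (‖b‖ + 1)) ≤ r := fun t ht =>
    (mul_le_mul_of_nonneg_right ht.2 (by positivity)).trans hr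
  have hdist : ∀ t ∈ Icc 0 t0, ∀ t' ∈ Icc 0 t0, ∀ d ∈ closedBall (0 : E) 1,
      ∀ d' ∈ closedBall (0 : E) 1, dist (H (t • A (b + d))) (H (t' • A (b + d')))
        ≤ L * (|t - t'| * (‖A‖ * (‖b‖ + 1)) + t' * (‖A‖ * ‖d - d'‖)) :=
    fun t ht t' ht' d hd d' hd' => hH.dist_comp_smul_le A b ht.1 ht'.1 (htr t ht) (htr t' ht')
      (mem_closedBall_zero_iff.1 hd) (mem_closedBall_zero_iff.1 hd')
  have hnorm : ∀ t ∈ Icc 0 t0, ∀ d ∈ closedBall (0 : E) 1,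
      ‖H (t • A (b + d))‖ ≤ L * (‖A‖ * (‖b‖ + 1)) * t := fun t ht d hd => by
    simpa [hH0, abs_of_nonneg ht.1, mul_comm, mul_left_comm] using
      hdist t ht 0 ⟨le_rfl, ht0⟩ d hd 0 (mem_closedBall_self zero_le_one)
  obtain ⟨x, hxLip, hx⟩ := exists_lipschitzWith_isFixedPt_of_mapsTo (P := Icc 0 t0)
    (F := fun t d => H ((t : ℝ) • A (b + d))) isClosed_closedBall
    (nonempty_closedBall.2 zero_le_one) (K := 1 / 2) (C := L * (‖A‖₊ * (‖b‖₊ + 1)))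
    (by norm_num)
    (fun t d hd => mem_closedBall_zero_iff.2 <| calc
      _ ≤ L * (‖A‖ * (‖b‖ + 1)) * (t : ℝ) := hnorm t t.2 d hd
      _ ≤ L * (‖A‖ * (‖b‖ + 1)) * t0 := by gcongr; exact t.2.2
      _ = L * (t0 * (‖A‖ * (‖b‖ + 1))) := by ring
      _ ≤ 1 := hmaps)
    (fun t => LipschitzOnWith.of_dist_le_mul fun d hd d' hd' => calc
      _ ≤ L * (|(t : ℝ) - t| * (‖A‖ * (‖b‖ + 1)) + t * (‖A‖ * ‖d - d'‖)) :=
          hdist t t.2 t t.2 d hd d' hd'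
      _ = L * ((t : ℝ) * ‖A‖) * dist d d' := by rw [sub_self, dist_eq_norm]; ring
      _ ≤ L * (t0 * ‖A‖) * dist d d' := by gcongr; exact t.2.2
      _ ≤ ((1 / 2 : ℝ≥0) : ℝ) * dist d d' := by push_cast; gcongr)
    (fun d hd => LipschitzWith.of_dist_le_mul fun t t' => calc
      _ ≤ L * (|(t : ℝ) - t'| * (‖A‖ * (‖b‖ + 1)) + t' * (‖A‖ * ‖d - d‖)) :=
          hdist t t.2 t' t'.2 d hd d hd
      _ = ((L * (‖A‖₊ * (‖b‖₊ + 1)) : ℝ≥0) : ℝ) * dist t t' := by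
          rw [sub_self, norm_zero, Subtype.dist_eq, Real.dist_eq]; push_cast; ring)
  refine ⟨fun t => x (projIcc 0 t0 ht0 t), (hxLip.continuous.comp continuous_projIcc).continuousOn,
    fun t ht => ?_⟩
  obtain ⟨hmem, hfix⟩ := hx ⟨t, ht⟩
  simp only [projIcc_of_mem _ ht]
  refine ⟨?_, (norm_smul_apply_le A b ht.1 (mem_closedBall_zero_iff.1 hmem)).trans (htr t ht),
    hfix.symm⟩
  rw [← hfix]
  exact hnorm t ht _ hmem

theorem LipschitzOnWith.exists_continuousOn_eq_comp_smul {U : Set E}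
    (hH : LipschitzOnWith L H U) (hU : U ∈ 𝓝 0) (hH0 : H 0 = 0) (A : E →L[ℝ] E) (b : E) :
    ∃ t0 > 0, ∃ C : ℝ≥0, ∃ δ : ℝ → E, ContinuousOn δ (Icc 0 t0) ∧ ∀ t ∈ Icc 0 t0,
      ‖δ t‖ ≤ C * t ∧ t • A (b + δ t) ∈ U ∧ δ t = H (t • A (b + δ t)) := by
  obtain ⟨r, hr, hrU⟩ := nhds_basis_closedBall.mem_iff.1 hU
  have hid : Tendsto (fun t : ℝ => t) (𝓝[>] 0) (𝓝 0) := nhdsWithin_le_nhds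
  have hsmall : ∀ᶠ t in 𝓝[>] (0 : ℝ), t * (‖A‖ * (‖b‖ + 1)) ≤ r ∧
      L * (t * (‖A‖ * (‖b‖ + 1))) ≤ 1 ∧ L * (t * ‖A‖) ≤ 1 / 2 :=
    ((hid.mul_const _).eventually_le_const (by simpa using hr)).and <|
      (((hid.mul_const _).const_mul _).eventually_le_const (by simp)).and
      (((hid.mul_const _).const_mul _).eventually_le_const (by norm_num))
  obtain ⟨t0, ⟨hr0, hmaps, hcontr⟩, ht0⟩ := (hsmall.and self_mem_nhdsWithin).exists
  obtain ⟨δ, hδ, hδt⟩ :=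
    (hH.mono hrU).exists_continuousOn_eq_comp_smul_of_closedBall hH0 A b ht0.le hr0 hmaps hcontr
  refine ⟨t0, ht0, L * (‖A‖₊ * (‖b‖₊ + 1)), δ, hδ, fun t ht => ?_⟩
  obtain ⟨hnorm, hball, hfix⟩ := hδt t ht
  exact ⟨by simpa using hnorm, hrU (mem_closedBall_zero_iff.2 hball), hfix⟩

end Perturbation

noncomputable def loadDeviation (η : ℝ) (z : ℂ) : ℂ := ((‖1 + z‖ ^ η : ℝ) : ℂ) / (1 + z) - 1

@[simp]
theorem loadDeviation_zero (η : ℝ) : loadDeviation η 0 = 0 := by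
  simp [loadDeviation]

theorem contDiffAt_loadDeviation (η : ℝ) : ContDiffAt ℝ 1 (loadDeviation η) 0 := by
  have h1 : ContDiffAt ℝ 1 (fun z : ℂ => 1 + z) 0 := by fun_prop
  have h2 := (h1.norm ℝ (by simp)).rpow_const_of_ne (p := η) (by simp)
  unfold loadDeviation
  simp_rw [div_eq_mul_inv]
  exact ((Complex.ofRealCLM.contDiff.contDiffAt.comp _ h2).mul (h1.inv (by simp))).sub
    contDiffAt_const

theorem mul_star_eq_of_loadDeviation {ε : ℝ} (hε : ε ≠ 0) {η : ℝ} {s w δ : ℂ}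
    (hw : ‖(ε : ℂ) ^ 2 * w‖ < 1) (hδ : δ = star (s * loadDeviation η ((ε : ℂ) ^ 2 * w))) :
    ((ε : ℂ)⁻¹ + ε * w) * star (ε * (star s + δ)) =
      s * ((‖(ε : ℂ) * ((ε : ℂ)⁻¹ + ε * w)‖ ^ η : ℝ) : ℂ) := by
  have hεu : (ε : ℂ) * ((ε : ℂ)⁻¹ + ε * w) = 1 + (ε : ℂ) ^ 2 * w := by
    have : (ε : ℂ) ≠ 0 := by exact_mod_cast hε
    field_simp
  have hi : star ((ε : ℂ) * (star s + δ)) =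
      ε * (s * ((‖1 + (ε : ℂ) ^ 2 * w‖ ^ η : ℝ) : ℂ) / (1 + (ε : ℂ) ^ 2 * w)) := by
    subst hδ
    rw [star_mul', star_add, star_star, star_star, Complex.star_def, Complex.conj_ofReal,
      loadDeviation]
    ring
  have hz : 1 + (ε : ℂ) ^ 2 * w ≠ 0 := fun h => by
    rw [eq_neg_of_add_eq_zero_right h, norm_neg, norm_one] at hw
    exact lt_irrefl _ hw
  rw [hεu, hi, ← mul_assoc, mul_comm _ (ε : ℂ), hεu]
  field_simp

section PowerFlow

variable {ι : Type*} [Fintype ι] [DecidableEq ι]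

def balanceAtSlack {M : Type*} [AddCommGroup M] (v0 : ι) (c : ι → M) : ι → M :=
  c - Pi.single v0 (∑ v, c v)

theorem sum_balanceAtSlack {M : Type*} [AddCommGroup M] (v0 : ι) (c : ι → M) :
    ∑ v, balanceAtSlack v0 c v = 0 := by
  simp [balanceAtSlack, Finset.sum_sub_distrib]

theorem balanceAtSlack_of_ne {M : Type*} [AddCommGroup M] {v0 v : ι} (h : v ≠ v0) (c : ι → M) :
    balanceAtSlack v0 c v = c v := by
  simp [balanceAtSlack, h]

theorem contDiff_balanceAtSlack {𝕜 F : Type*} [NontriviallyNormedField 𝕜] [NormedAddCommGroup F]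
    [NormedSpace 𝕜 F] (v0 : ι) {k : WithTop ℕ∞} :
    ContDiff 𝕜 k (balanceAtSlack v0 : (ι → F) → ι → F) :=
  contDiff_id.sub ((ContinuousLinearMap.single 𝕜 (fun _ => F) v0).contDiff.comp (by fun_prop))

noncomputable def currentCorrection (v0 : ι) (s : ι → ℂ) (η : ι → ℝ) (w : ι → ℂ) : ι → ℂ :=
  balanceAtSlack v0 fun v => star (s v * loadDeviation (η v) (w v))

theorem currentCorrection_zero (v0 : ι) (s : ι → ℂ) (η : ι → ℝ) :
    currentCorrection v0 s η 0 = 0 := by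
  ext v
  simp [currentCorrection, balanceAtSlack]

theorem sum_currentCorrection (v0 : ι) (s : ι → ℂ) (η : ι → ℝ) (w : ι → ℂ) :
    ∑ v, currentCorrection v0 s η w v = 0 :=
  sum_balanceAtSlack v0 _

theorem currentCorrection_of_ne {v0 v : ι} (h : v ≠ v0) (s : ι → ℂ) (η : ι → ℝ) (w : ι → ℂ) :
    currentCorrection v0 s η w v = star (s v * loadDeviation (η v) (w v)) :=
  balanceAtSlack_of_ne h _

theorem contDiffAt_currentCorrection (v0 : ι) (s : ι → ℂ) (η : ι → ℝ) :
    ContDiffAt ℝ 1 (currentCorrection v0 s η) 0 :=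
  (contDiff_balanceAtSlack v0).contDiffAt.comp (0 : ι → ℂ) <| contDiffAt_pi.2 fun v =>
    Complex.conjCLE.contDiff.contDiffAt.comp (0 : ι → ℂ) <| contDiffAt_const.mul <|
      (contDiffAt_loadDeviation (η v)).comp (0 : ι → ℂ) (contDiff_apply ℝ ℂ v).contDiffAt

theorem powerFlow_of_eq_currentCorrection (v0 : ι) (X : Matrix ι ι ℂ) {s : ι → ℂ}
    (hs : ∑ v, s v = 0) (η : ι → ℝ) {ε : ℝ} (hε : ε ≠ 0) {d : ι → ℂ}
    (hsmall : ‖ε ^ 2 • X *ᵥ (star s + d)‖ < 1)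
    (hd : d = currentCorrection v0 s η (ε ^ 2 • X *ᵥ (star s + d))) :
    let i : ι → ℂ := (ε : ℂ) • (star s + d)
    let u : ι → ℂ := (ε : ℂ)⁻¹ • (fun _ => (1 : ℂ)) + (ε : ℂ) • (X *ᵥ star s + X *ᵥ d)
    (u = X *ᵥ i + (ε : ℂ)⁻¹ • fun _ => (1 : ℂ)) ∧ (∑ v, i v = 0) ∧
      ∀ v, v ≠ v0 → u v * star (i v) = s v * ((‖(ε : ℂ) * u v‖ ^ η v : ℝ) : ℂ) := by
  intro i u
  refine ⟨?_, ?_, fun v hv => ?_⟩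
  · simp only [u, i, mulVec_smul, mulVec_add]
    abel
  · simp only [i, Pi.smul_apply, Pi.add_apply, Pi.star_apply, smul_eq_mul]
    rw [← Finset.mul_sum, Finset.sum_add_distrib, ← star_sum, hs, hd, sum_currentCorrection,
      star_zero, add_zero, mul_zero]
  · have hw : ‖(ε : ℂ) ^ 2 * (X *ᵥ (star s + d)) v‖ < 1 := by
      simpa using (norm_le_pi_norm _ v).trans_lt hsmall
    have hdv : d v = star (s v * loadDeviation (η v) ((ε : ℂ) ^ 2 * (X *ᵥ (star s + d)) v)) := by
      conv_lhs => rw [hd]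
      rw [currentCorrection_of_ne hv]
      simp
    simp only [u, i, ← mulVec_add, Pi.add_apply, Pi.smul_apply, smul_eq_mul, Pi.star_apply,
      mul_one]
    exact mul_star_eq_of_loadDeviation hε hw hdv

end PowerFlow

theorem power_flow_taylor_expansion_general (n : ℕ) (v0 : Fin n)
    (X : Matrix (Fin n) (Fin n) ℂ)
    (s : Fin n → ℂ) (hs : ∑ v, s v = 0) (η : Fin n → ℝ) :
    ∃ ε0 > (0 : ℝ), ∃ K > (0 : ℝ), ∃ δ lam : ℝ → (Fin n → ℂ),
      ContinuousOn δ (Set.Ico 0 ε0) ∧ ContinuousOn lam (Set.Ico 0 ε0) ∧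
      δ 0 = 0 ∧ lam 0 = 0 ∧
      (∀ ε ∈ Set.Ico (0 : ℝ) ε0, ‖δ ε‖ ≤ K * ε ∧ ‖lam ε‖ ≤ K * ε) ∧
      (∀ ε ∈ Set.Ioo (0 : ℝ) ε0,
        let i : Fin n → ℂ := (ε : ℂ) • (star s + δ ε)
        let u : Fin n → ℂ :=
          (ε : ℂ)⁻¹ • (fun _ => (1 : ℂ)) + (ε : ℂ) • (X.mulVec (star s) + lam ε)
        -- (a)  u = X i + ε⁻¹ 1
        (u = X.mulVec i + (ε : ℂ)⁻¹ • fun _ => (1 : ℂ)) ∧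
        -- (b)  1ᵀ i = 0
        (∑ v, i v = 0) ∧
        -- (c)  u_v conj(i_v) = s_v |ε u_v|^{η_v}  for all v ≠ 0
        (∀ v : Fin n, v ≠ v0 →
          u v * star (i v) = s v * ((‖(ε : ℂ) * u v‖ ^ η v : ℝ) : ℂ))) := by
  let A : (Fin n → ℂ) →L[ℝ] (Fin n → ℂ) :=
    LinearMap.toContinuousLinearMap ((Matrix.mulVecLin X).restrictScalars ℝ)
  obtain ⟨L, U, hU, hLip⟩ := (contDiffAt_currentCorrection v0 s η).exists_lipschitzOnWith
  obtain ⟨t0, ht0, C, d, hd, hdt⟩ := (hLip.mono inter_subset_left).exists_continuousOn_eq_comp_smul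
    (inter_mem hU (ball_mem_nhds 0 one_pos)) (currentCorrection_zero v0 s η) A (star s)
  have hsq : ∀ ε ∈ Ico 0 (min 1 t0), ε ^ 2 ∈ Icc 0 t0 ∧ ε ^ 2 ≤ ε := fun ε ⟨h0, h1⟩ => by
    have := lt_min_iff.1 h1
    refine ⟨⟨by positivity, ?_⟩, ?_⟩ <;> nlinarith
  have hbound : ∀ ε ∈ Ico 0 (min 1 t0), ‖d (ε ^ 2)‖ ≤ C * ε := fun ε hε =>
    (hdt _ (hsq ε hε).1).1.trans (by gcongr; exact (hsq ε hε).2)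
  have hcont : ContinuousOn (fun ε => d (ε ^ 2)) (Ico 0 (min 1 t0)) :=
    hd.comp (continuous_pow 2).continuousOn fun ε hε => (hsq ε hε).1
  have hd0 : d 0 = 0 := by
    simpa using hbound 0 ⟨le_rfl, lt_min one_pos ht0⟩
  refine ⟨min 1 t0, lt_min one_pos ht0, (‖A‖ + 1) * C + 1, by positivity, fun ε => d (ε ^ 2),
    fun ε => X *ᵥ d (ε ^ 2), hcont, A.continuous.comp_continuousOn hcont, by simpa using hd0,
    by simp [hd0], fun ε hε => ⟨?_, ?_⟩, fun ε hε => ?_⟩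
  · exact (hbound ε hε).trans
      (by nlinarith [mul_nonneg (mul_nonneg (norm_nonneg A) C.coe_nonneg) hε.1, hε.1])
  · calc ‖A (d (ε ^ 2))‖ ≤ ‖A‖ * (C * ε) := A.le_opNorm_of_le (hbound ε hε)
      _ ≤ ((‖A‖ + 1) * C + 1) * ε := by nlinarith [mul_nonneg C.coe_nonneg hε.1, hε.1]
  obtain ⟨-, ⟨-, hball⟩, hfix⟩ := hdt _ (hsq ε (Ioo_subset_Ico_self hε)).1
  exact powerFlow_of_eq_currentCorrection v0 X hs η hε.1.ne' (mem_ball_zero_iff.1 hball) hfix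

/-- Taylor-type expansion of the power flow solutions for large nominal
voltage `U_N = 1/ε`: there are continuous, `O(ε)` correction terms `δ, λ` such that the currents
`i(ε) = ε(s̄ + δ(ε))` and voltages `u(ε) = ε⁻¹ 1 + ε (X s̄ + λ(ε))` solve the power flow
equations. -/
theorem power_flow_taylor_expansion (n : ℕ) (hn : 1 ≤ n) (v0 : Fin n)
    (X : Matrix (Fin n) (Fin n) ℂ) (hXsym : Xᵀ = X)
    (hX0 : X.mulVec (Pi.single v0 1) = 0)
    (s : Fin n → ℂ) (hs : ∑ v, s v = 0) (η : Fin n → ℝ) :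
    ∃ ε0 > (0 : ℝ), ∃ K > (0 : ℝ), ∃ δ lam : ℝ → (Fin n → ℂ),
      ContinuousOn δ (Set.Ico 0 ε0) ∧ ContinuousOn lam (Set.Ico 0 ε0) ∧
      δ 0 = 0 ∧ lam 0 = 0 ∧
      (∀ ε ∈ Set.Ico (0 : ℝ) ε0, ‖δ ε‖ ≤ K * ε ∧ ‖lam ε‖ ≤ K * ε) ∧
      (∀ ε ∈ Set.Ioo (0 : ℝ) ε0,
        let i : Fin n → ℂ := (ε : ℂ) • (star s + δ ε)
        let u : Fin n → ℂ :=
          (ε : ℂ)⁻¹ • (fun _ => (1 : ℂ)) + (ε : ℂ) • (X.mulVec (star s) + lam ε)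
        -- (a)  u = X i + ε⁻¹ 1
        (u = X.mulVec i + (ε : ℂ)⁻¹ • fun _ => (1 : ℂ)) ∧
        -- (b)  1ᵀ i = 0
        (∑ v, i v = 0) ∧
        -- (c)  u_v conj(i_v) = s_v |ε u_v|^{η_v}  for all v ≠ 0
        (∀ v : Fin n, v ≠ v0 →
          u v * star (i v) = s v * ((‖(ε : ℂ) * u v‖ ^ η v : ℝ) : ℂ))) :=
  power_flow_taylor_expansion_general n v0 X s hs η
end

section
/- Let E be a finite set, n ≥ 1, A ∈ ℝ^{E×n} a real matrix, z ∈ ℂ^E, Z := diag(z), and X ∈ ℂ^{n×n} symmetric (X^T = X). Suppose the vectors i, u ∈ ℂ^n, ξ ∈ ℂ^E and the scalar α ∈ ℂ satisfy A^T ξ + i = 0, A u + Z ξ = 0, u = X i + α 1, and 1^T i = 0. Then the total active power loss satisfies Σ_{e ∈ E} Re(z_e) |ξ_e|² = conj(i)^T Re(X) i, where Re(X) denotes the entrywise real part of X and conj(i) the entrywise complex conjugate of i. -/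
/-!
Pairing Kirchhoff's current law with the conjugate line currents and the voltage law shows
(Tellegen) that the complex power `conj(i)ᵀ u` injected at the nodes equals `Σ_e z_e |ξ_e|²`.
Since `1ᵀ i = 0`, the constant `α` drops out of `conj(i)ᵀ u`, so `conj(i)ᵀ X i = Σ_e z_e |ξ_e|²`.
For symmetric `X` the quadratic form of `Re X` is the real part of that of `X`, because
`Re X = (X + Xᴴ) / 2`; taking real parts gives the claim.
-/

open Matrix

section StarRing

variable {α m n : Type*}

theorem conjTranspose_eq_map_star_of_transpose_eq [Star α] {X : Matrix n n α} (hX : Xᵀ = X) :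
    Xᴴ = X.map star := by
  rw [conjTranspose, hX]

variable [CommRing α] [StarRing α]

theorem star_dotProduct_conjTranspose_mulVec [Fintype n] (X : Matrix n n α) (v : n → α) :
    star v ⬝ᵥ Xᴴ *ᵥ v = star (star v ⬝ᵥ X *ᵥ v) := by
  rw [dotProduct_mulVec, ← star_mulVec, star_dotProduct]

theorem star_dotProduct_smul_const_of_sum_eq_zero [Fintype n] {i : n → α} (hi : ∑ v, i v = 0)
    (a : α) : star i ⬝ᵥ (a • fun _ => (1 : α)) = 0 := by
  simp [dotProduct, ← Finset.sum_mul, ← star_sum, hi]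

/-- Tellegen's theorem for the network equations `Bᴴ ξ + i = 0`, `B u + Z ξ = 0`. -/
theorem star_dotProduct_eq_of_kirchhoff [Fintype m] [Fintype n] (B : Matrix m n α)
    (Z : Matrix m m α) {i u : n → α} {ξ : m → α}
    (hKCL : Bᴴ *ᵥ ξ + i = 0) (hKVL : B *ᵥ u + Z *ᵥ ξ = 0) :
    star i ⬝ᵥ u = star ξ ⬝ᵥ Z *ᵥ ξ := by
  rw [eq_neg_of_add_eq_zero_right hKCL, star_neg, star_mulVec, conjTranspose_conjTranspose,
    neg_dotProduct, ← dotProduct_mulVec, eq_neg_of_add_eq_zero_left hKVL, dotProduct_neg, neg_neg]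

end StarRing

theorem conjTranspose_map_ofReal {m n : Type*} (A : Matrix m n ℝ) :
    (A.map (fun a => (a : ℂ)))ᴴ = (A.map (fun a => (a : ℂ)))ᵀ := by
  ext
  simp

theorem star_dotProduct_diagonal_mulVec {m : Type*} [Fintype m] [DecidableEq m] (z ξ : m → ℂ) :
    star ξ ⬝ᵥ diagonal z *ᵥ ξ = ∑ e, z e * ((‖ξ e‖ ^ 2 : ℝ) : ℂ) := by
  simp only [dotProduct, mulVec_diagonal]
  refine Finset.sum_congr rfl fun e _ => ?_
  rw [Pi.star_apply, Complex.star_def, Complex.ofReal_pow, ← Complex.conj_mul']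
  ring

theorem star_dotProduct_map_re_mulVec {n : Type*} [Fintype n] {X : Matrix n n ℂ} (hX : Xᵀ = X)
    (v : n → ℂ) :
    star v ⬝ᵥ X.map (fun a => ((a.re : ℝ) : ℂ)) *ᵥ v = ((star v ⬝ᵥ X *ᵥ v).re : ℂ) := by
  have hre : X.map (fun a => ((a.re : ℝ) : ℂ)) = (2⁻¹ : ℂ) • (X + Xᴴ) := by
    rw [conjTranspose_eq_map_star_of_transpose_eq hX]
    ext j k
    simp only [Complex.re_eq_add_conj, map_apply, Complex.star_def, Matrix.smul_apply,
      Matrix.add_apply, smul_eq_mul]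
    ring
  rw [hre, smul_mulVec, dotProduct_smul, add_mulVec, dotProduct_add,
    star_dotProduct_conjTranspose_mulVec, Complex.re_eq_add_conj, smul_eq_mul, Complex.star_def]
  ring

theorem total_losses_eq_quadratic_form_general (E : Type) [Fintype E] [DecidableEq E] (n : ℕ)
    (A : Matrix E (Fin n) ℝ) (z : E → ℂ)
    (X : Matrix (Fin n) (Fin n) ℂ) (hXsym : Xᵀ = X)
    (i u : Fin n → ℂ) (ξ : E → ℂ) (α : ℂ)
    (hKCL : (A.map (fun a => (a : ℂ)))ᵀ.mulVec ξ + i = 0)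
    (hKVL : (A.map (fun a => (a : ℂ))).mulVec u + (Matrix.diagonal z).mulVec ξ = 0)
    (hu : u = X.mulVec i + α • fun _ => (1 : ℂ))
    (hi : ∑ v, i v = 0) :
    ((∑ e, (z e).re * ‖ξ e‖ ^ 2 : ℝ) : ℂ)
      = star i ⬝ᵥ (X.map (fun a => ((a.re : ℝ) : ℂ))).mulVec i := by
  rw [← conjTranspose_map_ofReal] at hKCL
  have hpower : star i ⬝ᵥ X *ᵥ i = ∑ e, z e * ((‖ξ e‖ ^ 2 : ℝ) : ℂ) := by
    rw [← star_dotProduct_diagonal_mulVec, ← star_dotProduct_eq_of_kirchhoff _ _ hKCL hKVL, hu,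
      dotProduct_add, star_dotProduct_smul_const_of_sum_eq_zero hi, add_zero]
  rw [star_dotProduct_map_re_mulVec hXsym, hpower, Complex.re_sum]
  simp only [Complex.re_mul_ofReal]

/-- Under the network equations `Aᵀξ + i = 0`, `Au + Zξ = 0`, `u = Xi + α1`,
`1ᵀi = 0`, with `X` symmetric, the total line loss `Σ_e Re(z_e)|ξ_e|²` equals
`conj(i)ᵀ Re(X) i`. -/
theorem total_losses_eq_quadratic_form (E : Type) [Fintype E] [DecidableEq E] (n : ℕ) (hn : 1 ≤ n)
    (A : Matrix E (Fin n) ℝ) (z : E → ℂ)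
    (X : Matrix (Fin n) (Fin n) ℂ) (hXsym : Xᵀ = X)
    (i u : Fin n → ℂ) (ξ : E → ℂ) (α : ℂ)
    (hKCL : (A.map (fun a => (a : ℂ)))ᵀ.mulVec ξ + i = 0)
    (hKVL : (A.map (fun a => (a : ℂ))).mulVec u + (Matrix.diagonal z).mulVec ξ = 0)
    (hu : u = X.mulVec i + α • fun _ => (1 : ℂ))
    (hi : ∑ v, i v = 0) :
    ((∑ e, (z e).re * ‖ξ e‖ ^ 2 : ℝ) : ℂ)
      = star i ⬝ᵥ (X.map (fun a => ((a.re : ℝ) : ℂ))).mulVec i :=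
  total_losses_eq_quadratic_form_general E n A z X hXsym i u ξ α hKCL hKVL hu hi
end

section
/- Fix integers m ≥ 1, p ≥ 0, a nonempty cluster C_r ⊆ {1,…,m}, and let Ω_r := diag(1_{C_r}) − (1/|C_r|) 1_{C_r} 1_{C_r}^T ∈ ℝ^{m×m}. Let H ∈ ℝ^{(m+p)×(m+p)} be symmetric positive semidefinite, partitioned as H = [[M, N],[N^T, Q]] with M ∈ ℝ^{m×m} positive definite, and set J(q) := ½ q^T H q for q ∈ ℝ^{m+p}. Let P_r be the Moore–Penrose pseudoinverse of Ω_r M Ω_r and define S_r := {x ∈ ℝ^m : Σ_{j ∈ C_r} x_j = 0 and x_j = 0 for all j ∉ C_r}. Then: (a) S_r equals the column space of Ω_r; (b) for any q_C ∈ ℝ^m and q_L ∈ ℝ^p, the vector q* := q_C − P_r (M q_C + N q_L) satisfies q* − q_C ∈ S_r, and for every q' ∈ ℝ^m with q' − q_C ∈ S_r one has J((q'; q_L)) ≥ J((q*; q_L)); i.e., q* minimizes J over the affine constraint set. -/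
open Matrix

/-- The centering matrix `Ω_C = diag(1_C) − (1/|C|) 1_C 1_Cᵀ` associated with a cluster `C`. -/
noncomputable def Omega {m : ℕ} (C : Finset (Fin m)) : Matrix (Fin m) (Fin m) ℝ :=
  Matrix.diagonal (fun i => if i ∈ C then (1 : ℝ) else 0) -
    (1 / (C.card : ℝ)) • Matrix.vecMulVec (fun i => if i ∈ C then (1 : ℝ) else 0)
      (fun i => if i ∈ C then (1 : ℝ) else 0)

/-- `P` is the Moore–Penrose pseudoinverse of `B`. -/
def IsMP {m : ℕ} (B P : Matrix (Fin m) (Fin m) ℝ) : Prop :=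
  B * P * B = B ∧ P * B * P = P ∧ (B * P)ᵀ = B * P ∧ (P * B)ᵀ = P * B

/-!
Write `B = Ω M Ω` and `g = M q_C + N q_L`. Since `P = P B P = Bᵀ Pᵀ P`, the range of `P` lies in
the range of `Ω`, which is `S_r`; so `q*` is feasible. Since `B P` is the orthogonal projector onto
the range of `B`, and `B` is injective on `S_r` because `M` is positive definite, `B P` fixes
`S_r`. Hence `x ⬝ M P g = x ⬝ B P g = x ⬝ g` for `x ∈ S_r`: the gradient `M q* + N q_L = g − M P g`
is orthogonal to `S_r`, and a convex quadratic is minimized on an affine subspace at any point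
where its gradient is orthogonal to the direction space.
-/

section Pseudoinverse

variable {n R : Type*} [Fintype n] [CommRing R] {B P : Matrix n n R}

theorem eq_transpose_mul_of_mul_mul_eq (hPBP : P * B * P = P) (hPB : (P * B)ᵀ = P * B) :
    P = Bᵀ * (Pᵀ * P) := by
  calc P = (P * B)ᵀ * P := by rw [hPB, hPBP]
    _ = Bᵀ * (Pᵀ * P) := by rw [transpose_mul, Matrix.mul_assoc]

theorem vecMul_sub_mul_mulVec_eq_zero (hBPB : B * P * B = B) (hBP : (B * P)ᵀ = B * P)
    (x : n → R) : (x - (B * P) *ᵥ x) ᵥ* B = 0 := by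
  rw [sub_vecMul, ← vecMul_transpose, hBP, vecMul_vecMul, hBPB, sub_self]

end Pseudoinverse

section Quadratic

variable {m n R : Type*} [Fintype m] [Fintype n] [CommRing R]

theorem sumElim_dotProduct_fromBlocks_mulVec_sumElim (M : Matrix m m R) (N : Matrix m n R)
    (Q : Matrix n n R) (x : m → R) (y : n → R) :
    Sum.elim x y ⬝ᵥ (fromBlocks M N Nᵀ Q *ᵥ Sum.elim x y) =
      x ⬝ᵥ (M *ᵥ x) + 2 * (x ⬝ᵥ (N *ᵥ y)) + y ⬝ᵥ (Q *ᵥ y) := by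
  have hN : y ⬝ᵥ (Nᵀ *ᵥ x) = x ⬝ᵥ (N *ᵥ y) := by
    rw [mulVec_transpose, dotProduct_comm, dotProduct_mulVec]
  rw [fromBlocks_mulVec, Sum.elim_comp_inl, Sum.elim_comp_inr, sumElim_dotProduct_sumElim,
    dotProduct_add, dotProduct_add, hN]
  ring

theorem quadratic_le_of_dotProduct_gradient_eq_zero {M : Matrix m m ℝ} (hM : M.PosSemidef)
    (b x y : m → ℝ) (hgrad : (y - x) ⬝ᵥ (M *ᵥ x + b) = 0) :
    x ⬝ᵥ (M *ᵥ x) + 2 * (x ⬝ᵥ b) ≤ y ⬝ᵥ (M *ᵥ y) + 2 * (y ⬝ᵥ b) := by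
  obtain ⟨h, rfl⟩ : ∃ h, y = x + h := ⟨y - x, (add_sub_cancel x y).symm⟩
  rw [add_sub_cancel_left] at hgrad
  have hsymm : x ⬝ᵥ (M *ᵥ h) = h ⬝ᵥ (M *ᵥ x) := by
    rw [dotProduct_mulVec, ← mulVec_transpose, ← conjTranspose_eq_transpose_of_trivial,
      hM.isHermitian.eq, dotProduct_comm]
  have hpos : 0 ≤ h ⬝ᵥ (M *ᵥ h) := by simpa using hM.dotProduct_mulVec_nonneg h
  simp only [mulVec_add, dotProduct_add, add_dotProduct] at hgrad ⊢
  linarith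

end Quadratic

def clusterSubspace {m : ℕ} (C : Finset (Fin m)) : Submodule ℝ (Fin m → ℝ) where
  carrier := {x | (∑ j ∈ C, x j = 0) ∧ ∀ j ∉ C, x j = 0}
  add_mem' {x y} hx hy := by
    refine ⟨?_, fun j hj => ?_⟩
    · simp [Finset.sum_add_distrib, hx.1, hy.1]
    · simp [hx.2 j hj, hy.2 j hj]
  zero_mem' := by simp
  smul_mem' c x hx := by
    refine ⟨?_, fun j hj => ?_⟩
    · simp [← Finset.mul_sum, hx.1]
    · simp [hx.2 j hj]

namespace Omega

variable {m : ℕ} {C : Finset (Fin m)}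

theorem mulVec_apply (y : Fin m → ℝ) (i : Fin m) :
    (Omega C *ᵥ y) i = if i ∈ C then y i - (∑ j ∈ C, y j) / C.card else 0 := by
  have hsum : (fun j => if j ∈ C then (1 : ℝ) else 0) ⬝ᵥ y = ∑ j ∈ C, y j := by
    simp only [dotProduct, ite_mul, one_mul, zero_mul, Finset.sum_ite_mem, Finset.univ_inter]
  rw [Omega, sub_mulVec, smul_mulVec, vecMulVec_mulVec, hsum]
  simp only [Pi.sub_apply, mulVec_diagonal, Pi.smul_apply, smul_eq_mul,
    MulOpposite.smul_eq_mul_unop, MulOpposite.unop_op]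
  split_ifs <;> ring

theorem isSymm : (Omega C).IsSymm := by
  rw [IsSymm, Omega, transpose_sub, transpose_smul, diagonal_transpose, transpose_vecMulVec]

theorem mulVec_mem_clusterSubspace (y : Fin m → ℝ) : Omega C *ᵥ y ∈ clusterSubspace C := by
  refine ⟨?_, fun j hj => by rw [mulVec_apply, if_neg hj]⟩
  rw [Finset.sum_congr rfl fun j hj => by rw [mulVec_apply, if_pos hj], Finset.sum_sub_distrib,
    Finset.sum_const, nsmul_eq_mul]
  rcases C.eq_empty_or_nonempty with rfl | hC
  · simp
  · rw [mul_div_cancel₀ _ (by exact_mod_cast hC.card_pos.ne'), sub_self]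

theorem mulVec_of_mem {x : Fin m → ℝ} (hx : x ∈ clusterSubspace C) : Omega C *ᵥ x = x := by
  funext i
  rw [mulVec_apply, hx.1, zero_div, sub_zero]
  split_ifs with hi
  · rfl
  · exact (hx.2 i hi).symm

theorem mem_clusterSubspace_iff_exists_mulVec_eq (x : Fin m → ℝ) :
    x ∈ clusterSubspace C ↔ ∃ y, Omega C *ᵥ y = x :=
  ⟨fun hx => ⟨x, mulVec_of_mem hx⟩, fun ⟨y, hy⟩ => hy ▸ mulVec_mem_clusterSubspace y⟩

theorem dotProduct_mulVec_of_mem {x : Fin m → ℝ} (hx : x ∈ clusterSubspace C) (w : Fin m → ℝ) :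
    x ⬝ᵥ (Omega C *ᵥ w) = x ⬝ᵥ w := by
  rw [dotProduct_mulVec, ← mulVec_transpose, isSymm.eq, mulVec_of_mem hx]

end Omega

section ClusterPseudoinverse

variable {m : ℕ} {C : Finset (Fin m)} {M P : Matrix (Fin m) (Fin m) ℝ}

theorem IsMP.mulVec_mem_clusterSubspace (hP : IsMP (Omega C * M * Omega C) P)
    (g : Fin m → ℝ) : P *ᵥ g ∈ clusterSubspace C := by
  have hfac := eq_transpose_mul_of_mul_mul_eq hP.2.1 hP.2.2.2
  rw [transpose_mul, transpose_mul, Omega.isSymm.eq, Matrix.mul_assoc] at hfac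
  rw [hfac, ← mulVec_mulVec]
  exact Omega.mulVec_mem_clusterSubspace _

theorem IsMP.mul_mulVec_of_mem (hM : M.PosDef) (hP : IsMP (Omega C * M * Omega C) P)
    {x : Fin m → ℝ} (hx : x ∈ clusterSubspace C) :
    (Omega C * M * Omega C * P) *ᵥ x = x := by
  set w := x - (Omega C * M * Omega C * P) *ᵥ x
  have hwS : w ∈ clusterSubspace C := by
    refine Submodule.sub_mem _ hx ?_
    rw [Matrix.mul_assoc, Matrix.mul_assoc, ← mulVec_mulVec]
    exact Omega.mulVec_mem_clusterSubspace _
  have hwBw : w ⬝ᵥ (M *ᵥ w) = 0 := by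
    calc w ⬝ᵥ (M *ᵥ w) = w ⬝ᵥ ((Omega C * M * Omega C) *ᵥ w) := by
          rw [← mulVec_mulVec, ← mulVec_mulVec, Omega.dotProduct_mulVec_of_mem hwS,
            Omega.mulVec_of_mem hwS]
      _ = 0 := by
          rw [dotProduct_mulVec, vecMul_sub_mul_mulVec_eq_zero hP.1 hP.2.2.1, zero_dotProduct]
  by_contra hne
  have hpos := hM.dotProduct_mulVec_pos (sub_ne_zero.mpr (Ne.symm hne))
  rw [star_trivial] at hpos
  exact hpos.ne' hwBw

theorem IsMP.dotProduct_mulVec_mulVec_of_mem (hM : M.PosDef)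
    (hP : IsMP (Omega C * M * Omega C) P) {x : Fin m → ℝ} (hx : x ∈ clusterSubspace C)
    (g : Fin m → ℝ) : x ⬝ᵥ (M *ᵥ (P *ᵥ g)) = x ⬝ᵥ g := by
  calc x ⬝ᵥ (M *ᵥ (P *ᵥ g))
      = x ⬝ᵥ (Omega C *ᵥ (M *ᵥ (Omega C *ᵥ (P *ᵥ g)))) := by
        rw [Omega.mulVec_of_mem (hP.mulVec_mem_clusterSubspace g),
          Omega.dotProduct_mulVec_of_mem hx]
    _ = ((Omega C * M * Omega C * P)ᵀ *ᵥ x) ⬝ᵥ g := by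
        rw [mulVec_transpose, ← dotProduct_mulVec]
        simp only [mulVec_mulVec, Matrix.mul_assoc]
    _ = x ⬝ᵥ g := by rw [hP.2.2.1, hP.mul_mulVec_of_mem hM hx]

end ClusterPseudoinverse

theorem cluster_update_minimizes_general (m p : ℕ)
    (C : Finset (Fin m))
    (M : Matrix (Fin m) (Fin m) ℝ) (N : Matrix (Fin m) (Fin p) ℝ)
    (Q : Matrix (Fin p) (Fin p) ℝ)
    (hM : M.PosDef)
    (P : Matrix (Fin m) (Fin m) ℝ)
    (hP : IsMP (Omega C * M * Omega C) P)
    (J : (Fin m ⊕ Fin p → ℝ) → ℝ)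
    (hJ : ∀ q, J q = (1 / 2) * (q ⬝ᵥ (Matrix.fromBlocks M N Nᵀ Q).mulVec q)) :
    -- (a) S_r is the column space of Ω_r
    (∀ x : Fin m → ℝ,
      ((∑ j ∈ C, x j = 0) ∧ ∀ j ∉ C, x j = 0) ↔ ∃ y, (Omega C).mulVec y = x) ∧
    -- (b) the update is feasible and optimal
    (∀ qC : Fin m → ℝ, ∀ qL : Fin p → ℝ,
      let qs := qC - P.mulVec (M.mulVec qC + N.mulVec qL)
      ((∑ j ∈ C, (qs - qC) j = 0) ∧ ∀ j ∉ C, (qs - qC) j = 0) ∧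
      ∀ q' : Fin m → ℝ, ((∑ j ∈ C, (q' - qC) j = 0) ∧ ∀ j ∉ C, (q' - qC) j = 0) →
        J (Sum.elim qs qL) ≤ J (Sum.elim q' qL)) := by
  refine ⟨Omega.mem_clusterSubspace_iff_exists_mulVec_eq, fun qC qL => ?_⟩
  set g := M *ᵥ qC + N *ᵥ qL
  have hfeas : qC - P *ᵥ g - qC ∈ clusterSubspace C := by
    rw [sub_sub_cancel_left]
    exact Submodule.neg_mem _ (hP.mulVec_mem_clusterSubspace g)
  refine ⟨hfeas, fun q' hq' => ?_⟩
  have hh : q' - (qC - P *ᵥ g) ∈ clusterSubspace C := by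
    rw [← sub_sub_sub_cancel_right q' (qC - P *ᵥ g) qC]
    exact Submodule.sub_mem _ hq' hfeas
  have hgrad : (q' - (qC - P *ᵥ g)) ⬝ᵥ (M *ᵥ (qC - P *ᵥ g) + N *ᵥ qL) = 0 := by
    rw [mulVec_sub, sub_add_eq_add_sub, dotProduct_sub,
      hP.dotProduct_mulVec_mulVec_of_mem hM hh, sub_self]
  have hmin := quadratic_le_of_dotProduct_gradient_eq_zero hM.posSemidef _ _ _ hgrad
  rw [hJ, hJ, sumElim_dotProduct_fromBlocks_mulVec_sumElim,
    sumElim_dotProduct_fromBlocks_mulVec_sumElim]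
  linarith

/-- The subspace `S_r` equals the column space of `Ω_r`, and the update
`q* = q_C − P_r(M q_C + N q_L)` minimizes the quadratic cost `J` over the affine constraint
set `{q' : q' − q_C ∈ S_r}`. -/
theorem cluster_update_minimizes (m p : ℕ) (hm : 1 ≤ m)
    (C : Finset (Fin m)) (hC : C.Nonempty)
    (M : Matrix (Fin m) (Fin m) ℝ) (N : Matrix (Fin m) (Fin p) ℝ)
    (Q : Matrix (Fin p) (Fin p) ℝ)
    (hH : (Matrix.fromBlocks M N Nᵀ Q).PosSemidef) (hM : M.PosDef)
    (P : Matrix (Fin m) (Fin m) ℝ)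
    (hP : IsMP (Omega C * M * Omega C) P)
    (J : (Fin m ⊕ Fin p → ℝ) → ℝ)
    (hJ : ∀ q, J q = (1 / 2) * (q ⬝ᵥ (Matrix.fromBlocks M N Nᵀ Q).mulVec q)) :
    -- (a) S_r is the column space of Ω_r
    (∀ x : Fin m → ℝ,
      ((∑ j ∈ C, x j = 0) ∧ ∀ j ∉ C, x j = 0) ↔ ∃ y, (Omega C).mulVec y = x) ∧
    -- (b) the update is feasible and optimal
    (∀ qC : Fin m → ℝ, ∀ qL : Fin p → ℝ,
      let qs := qC - P.mulVec (M.mulVec qC + N.mulVec qL)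
      ((∑ j ∈ C, (qs - qC) j = 0) ∧ ∀ j ∉ C, (qs - qC) j = 0) ∧
      ∀ q' : Fin m → ℝ, ((∑ j ∈ C, (q' - qC) j = 0) ∧ ∀ j ∉ C, (q' - qC) j = 0) →
        J (Sum.elim qs qL) ≤ J (Sum.elim q' qL)) :=
  cluster_update_minimizes_general m p C M N Q hM P hP J hJ
end

section
/- Fix an integer m ≥ 1, a nonempty subset C_r ⊆ {1,…,m}, and let Ω_r := diag(1_{C_r}) − (1/|C_r|) 1_{C_r} 1_{C_r}^T ∈ ℝ^{m×m}. Let M ∈ ℝ^{m×m} be symmetric positive definite, let P_r be the Moore–Penrose pseudoinverse of Ω_r M Ω_r, and set F_r := I − P_r M. Then: (a) F_r^T M = M F_r (F_r is self-adjoint with respect to the inner product ⟨x,y⟩_M = x^T M y); (b) F_r² = F_r; (c) (F_r x)^T M (F_r x − x) = 0 for every x ∈ ℝ^m (F_r is an M-orthogonal projection); (d) F_r maps the hyperplane ker 1^T = {x : 1^T x = 0} into itself. -/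
/-!
`Ω = Ω_C` is a symmetric idempotent with `1ᵀ Ω = 0`, and `M` is symmetric, so `B = Ω M Ω` is
symmetric; by uniqueness of the Moore–Penrose inverse so is `P`. From `P = Bᵀ Pᵀ P = P Pᵀ Bᵀ`
one gets `Ω P = P = P Ω`, hence `P M P = P B P = P`: `P M` is idempotent, and so is
`F = 1 - P M`, which is `M`-self-adjoint because `P` and `M` are symmetric. Then
`Fᵀ M (F - 1) = M (F² - F) = 0` gives `M`-orthogonality, and `1ᵀ P = 1ᵀ Ω P = 0` gives
`1ᵀ F = 1ᵀ`, so `F` preserves `ker 1ᵀ`.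
-/

open Matrix

section Centering

variable {n K : Type*} [Fintype n] [DecidableEq n] [Field K]

noncomputable def centeringMatrix (v : n → K) : Matrix n n K :=
  diagonal v - (v ⬝ᵥ v)⁻¹ • vecMulVec v v

theorem centeringMatrix_transpose (v : n → K) : (centeringMatrix v)ᵀ = centeringMatrix v := by
  simp [centeringMatrix]

variable {v : n → K}

theorem centeringMatrix_isIdempotentElem (hv : v * v = v) :
    IsIdempotentElem (centeringMatrix v) := by
  have hDv : diagonal v *ᵥ v = v := (funext (mulVec_diagonal v v)).trans hv
  have hvD : v ᵥ* diagonal v = v := (funext (vecMul_diagonal v v)).trans hv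
  have hDD : diagonal v * diagonal v = diagonal v := by
    rw [diagonal_mul_diagonal]
    exact congrArg diagonal hv
  have hDV : diagonal v * vecMulVec v v = vecMulVec v v := by rw [mul_vecMulVec, hDv]
  have hVD : vecMulVec v v * diagonal v = vecMulVec v v := by rw [vecMulVec_mul, hvD]
  have hVV : vecMulVec v v * vecMulVec v v = (v ⬝ᵥ v) • vecMulVec v v := by
    rw [vecMulVec_mul_vecMulVec, vecMulVec_smul]
  -- valid also when `v ⬝ᵥ v = 0`, since `0⁻¹ = 0`
  have hc : (v ⬝ᵥ v)⁻¹ * ((v ⬝ᵥ v)⁻¹ * (v ⬝ᵥ v)) = (v ⬝ᵥ v)⁻¹ := by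
    by_cases h : v ⬝ᵥ v = 0 <;> simp [h]
  simp only [IsIdempotentElem, centeringMatrix, sub_mul, mul_sub, smul_mul_assoc, mul_smul_comm,
    smul_sub, smul_smul, hDD, hDV, hVD, hVV, hc]
  abel

theorem one_vecMul_centeringMatrix [LinearOrder K] [IsStrictOrderedRing K] (hv : v * v = v) :
    (1 : n → K) ᵥ* centeringMatrix v = 0 := by
  have hsum : v ⬝ᵥ v = 1 ⬝ᵥ v := by
    rw [one_dotProduct]
    exact Finset.sum_congr rfl fun i _ => congrFun hv i
  have h1D : (1 : n → K) ᵥ* diagonal v = v := funext fun i => by simp [vecMul_diagonal]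
  rw [centeringMatrix, vecMul_sub, vecMul_smul, h1D, vecMul_vecMulVec, ← hsum, smul_smul]
  by_cases hv0 : v ⬝ᵥ v = 0
  · simp [dotProduct_self_eq_zero.mp hv0]
  · rw [inv_mul_cancel₀ hv0, one_smul, sub_self]

end Centering

section Omega

variable {m : ℕ} (C : Finset (Fin m))

theorem Omega_eq_centeringMatrix :
    Omega C = centeringMatrix (fun i => if i ∈ C then (1 : ℝ) else 0) := by
  have hcard : ((fun i => if i ∈ C then (1 : ℝ) else 0) ⬝ᵥ fun i => if i ∈ C then (1 : ℝ) else 0)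
      = C.card := by
    simp [dotProduct]
  rw [Omega, centeringMatrix, hcard, one_div]

theorem Omega_transpose : (Omega C)ᵀ = Omega C := by
  rw [Omega_eq_centeringMatrix, centeringMatrix_transpose]

theorem indicator_mul_self :
    ((fun i => if i ∈ C then (1 : ℝ) else 0) * fun i => if i ∈ C then (1 : ℝ) else 0) =
      fun i => if i ∈ C then (1 : ℝ) else 0 :=
  funext fun i => by by_cases hi : i ∈ C <;> simp [hi]

theorem Omega_isIdempotentElem : IsIdempotentElem (Omega C) := by
  rw [Omega_eq_centeringMatrix]
  exact centeringMatrix_isIdempotentElem (indicator_mul_self C)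

theorem one_vecMul_Omega : (1 : Fin m → ℝ) ᵥ* Omega C = 0 := by
  rw [Omega_eq_centeringMatrix]
  exact one_vecMul_centeringMatrix (indicator_mul_self C)

end Omega

namespace IsMP

variable {m : ℕ} {B P Q : Matrix (Fin m) (Fin m) ℝ}

theorem transpose (h : IsMP B P) : IsMP Bᵀ Pᵀ := by
  obtain ⟨h1, h2, h3, h4⟩ := h
  refine ⟨?_, ?_, ?_, ?_⟩
  · rw [← transpose_mul, ← transpose_mul, ← mul_assoc, h1]
  · rw [← transpose_mul, ← transpose_mul, ← mul_assoc, h2]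
  · rw [← transpose_mul, h4, h4]
  · rw [← transpose_mul, h3, h3]

theorem unique (hP : IsMP B P) (hQ : IsMP B Q) : P = Q := by
  obtain ⟨p1, p2, p3, p4⟩ := hP
  obtain ⟨q1, q2, q3, q4⟩ := hQ
  have hBP : B * P = B * Q := by
    calc B * P = (B * Q * B) * P := by rw [q1]
    _ = (B * Q)ᵀ * (B * P)ᵀ := by rw [q3, p3, mul_assoc]
    _ = Qᵀ * (B * P * B)ᵀ := by simp only [transpose_mul, mul_assoc]
    _ = B * Q := by rw [p1, ← transpose_mul, q3]
  have hPB : P * B = Q * B := by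
    calc P * B = (P * (B * Q * B))ᵀ := by rw [q1, p4]
    _ = (Q * B)ᵀ * (P * B)ᵀ := by simp only [← transpose_mul, mul_assoc]
    _ = Q * (B * P * B) := by rw [q4, p4]; simp only [mul_assoc]
    _ = Q * B := by rw [p1]
  calc P = P * B * P := p2.symm
  _ = Q * B * Q := by rw [hPB, mul_assoc, hBP, ← mul_assoc]
  _ = Q := q2

theorem transpose_eq_self (hB : Bᵀ = B) (hP : IsMP B P) : Pᵀ = P :=
  (hB ▸ hP.transpose).unique hP

theorem eq_transpose_mul_mul (hP : IsMP B P) : P = Bᵀ * Pᵀ * P := by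
  calc P = P * B * P := hP.2.1.symm
  _ = Bᵀ * Pᵀ * P := by rw [← hP.2.2.2, transpose_mul]

theorem eq_mul_mul_transpose (hP : IsMP B P) : P = P * Pᵀ * Bᵀ := by
  calc P = P * (B * P) := by rw [← mul_assoc, hP.2.1]
  _ = P * Pᵀ * Bᵀ := by rw [← hP.2.2.1, transpose_mul, mul_assoc]

theorem mul_eq_of_mul_transpose (hP : IsMP B P) (hQ : Q * Bᵀ = Bᵀ) : Q * P = P := by
  calc Q * P = Q * (Bᵀ * Pᵀ * P) := by rw [← hP.eq_transpose_mul_mul]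
  _ = Bᵀ * Pᵀ * P := by simp only [← mul_assoc, hQ]
  _ = P := hP.eq_transpose_mul_mul.symm

theorem mul_eq_of_transpose_mul (hP : IsMP B P) (hQ : Bᵀ * Q = Bᵀ) : P * Q = P := by
  calc P * Q = P * Pᵀ * Bᵀ * Q := by rw [← hP.eq_mul_mul_transpose]
  _ = P * Pᵀ * Bᵀ := by rw [mul_assoc, hQ]
  _ = P := hP.eq_mul_mul_transpose.symm

variable {Ω A : Matrix (Fin m) (Fin m) ℝ}

theorem projection_mul_eq (hΩt : Ωᵀ = Ω) (hΩ : IsIdempotentElem Ω)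
    (hP : IsMP (Ω * A * Ω) P) : Ω * P = P :=
  hP.mul_eq_of_mul_transpose (by simp only [transpose_mul, hΩt, ← mul_assoc, hΩ.eq])

theorem mul_projection_eq (hΩt : Ωᵀ = Ω) (hΩ : IsIdempotentElem Ω)
    (hP : IsMP (Ω * A * Ω) P) : P * Ω = P :=
  hP.mul_eq_of_transpose_mul (by simp only [transpose_mul, hΩt, mul_assoc, hΩ.eq])

theorem mul_mul_eq_self (hΩt : Ωᵀ = Ω) (hΩ : IsIdempotentElem Ω)
    (hP : IsMP (Ω * A * Ω) P) : P * A * P = P := by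
  calc P * A * P = (P * Ω) * A * (Ω * P) := by
        rw [hP.mul_projection_eq hΩt hΩ, hP.projection_mul_eq hΩt hΩ]
  _ = P * (Ω * A * Ω) * P := by simp only [mul_assoc]
  _ = P := hP.2.1

end IsMP

theorem isIdempotentElem_one_sub_mul {R : Type*} [Ring R] {p a : R} (h : p * a * p = p) :
    IsIdempotentElem (1 - p * a) :=
  IsIdempotentElem.one_sub_iff.mpr (by rw [IsIdempotentElem, ← mul_assoc, h])

section Projection

variable {n R : Type*} [Fintype n] [DecidableEq n] [CommRing R] {P M F : Matrix n n R}

theorem transpose_one_sub_mul_mul (hP : Pᵀ = P) (hM : Mᵀ = M) :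
    (1 - P * M)ᵀ * M = M * (1 - P * M) := by
  simp only [transpose_sub, transpose_one, transpose_mul, hP, hM, sub_mul, mul_sub, one_mul,
    mul_one, mul_assoc]

theorem dotProduct_mulVec_mulVec_sub_eq_zero (hF : Fᵀ * M = M * F) (hFF : IsIdempotentElem F)
    (x : n → R) : F *ᵥ x ⬝ᵥ M *ᵥ (F *ᵥ x - x) = 0 := by
  have hFMF : Fᵀ * M * (F - 1) = 0 := by rw [hF, mul_sub, mul_one, mul_assoc, hFF.eq, sub_self]
  have hsub : F *ᵥ x - x = (F - 1) *ᵥ x := by rw [sub_mulVec, one_mulVec]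
  rw [hsub, mulVec_mulVec, ← vecMul_transpose, dotProduct_mulVec, vecMul_vecMul, ← mul_assoc,
    hFMF, vecMul_zero, zero_dotProduct]

theorem vecMul_one_sub_mul {v : n → R} (h : v ᵥ* P = 0) : v ᵥ* (1 - P * M) = v := by
  rw [vecMul_sub, vecMul_one, ← vecMul_vecMul, h, zero_vecMul, sub_zero]

end Projection

theorem Fr_projection_properties_general (m : ℕ) (C : Finset (Fin m))
    (M : Matrix (Fin m) (Fin m) ℝ) (hM : M.PosDef)
    (P : Matrix (Fin m) (Fin m) ℝ) (hP : IsMP (Omega C * M * Omega C) P)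
    (F : Matrix (Fin m) (Fin m) ℝ) (hF : F = 1 - P * M) :
    -- (a) self-adjoint w.r.t. ⟨x,y⟩_M
    Fᵀ * M = M * F ∧
    -- (b) projection
    F * F = F ∧
    -- (c) M-orthogonal projection
    (∀ x : Fin m → ℝ, F.mulVec x ⬝ᵥ M.mulVec (F.mulVec x - x) = 0) ∧
    -- (d) ker 1ᵀ is invariant
    (∀ x : Fin m → ℝ, (∑ i, x i = 0) → ∑ i, F.mulVec x i = 0) := by
  have hΩt := Omega_transpose C
  have hΩ := Omega_isIdempotentElem C
  have hMt : Mᵀ = M := hM.isHermitian.eq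
  have hPt : Pᵀ = P := hP.transpose_eq_self (by simp only [transpose_mul, hΩt, hMt, mul_assoc])
  have hFM : Fᵀ * M = M * F := hF ▸ transpose_one_sub_mul_mul hPt hMt
  have hFF : IsIdempotentElem F := hF ▸ isIdempotentElem_one_sub_mul (hP.mul_mul_eq_self hΩt hΩ)
  refine ⟨hFM, hFF.eq, dotProduct_mulVec_mulVec_sub_eq_zero hFM hFF, fun x hx => ?_⟩
  have h1P : (1 : Fin m → ℝ) ᵥ* P = 0 := by
    rw [← hP.projection_mul_eq hΩt hΩ, ← vecMul_vecMul, one_vecMul_Omega, zero_vecMul]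
  rw [← one_dotProduct, dotProduct_mulVec, hF, vecMul_one_sub_mul h1P, one_dotProduct, hx]

/-- The map `F_r = I − P_r M` is an `M`-self-adjoint projection, it is an
`M`-orthogonal projection, and it preserves the hyperplane `ker 1ᵀ`. -/
theorem Fr_projection_properties (m : ℕ) (hm : 1 ≤ m) (C : Finset (Fin m)) (hC : C.Nonempty)
    (M : Matrix (Fin m) (Fin m) ℝ) (hM : M.PosDef)
    (P : Matrix (Fin m) (Fin m) ℝ) (hP : IsMP (Omega C * M * Omega C) P)
    (F : Matrix (Fin m) (Fin m) ℝ) (hF : F = 1 - P * M) :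
    -- (a) self-adjoint w.r.t. ⟨x,y⟩_M
    Fᵀ * M = M * F ∧
    -- (b) projection
    F * F = F ∧
    -- (c) M-orthogonal projection
    (∀ x : Fin m → ℝ, F.mulVec x ⬝ᵥ M.mulVec (F.mulVec x - x) = 0) ∧
    -- (d) ker 1ᵀ is invariant
    (∀ x : Fin m → ℝ, (∑ i, x i = 0) → ∑ i, F.mulVec x i = 0) :=
  Fr_projection_properties_general m C M hM P hP F hF
end

section
/- Fix integers m ≥ 1 and ℓ ≥ 1 and nonempty subsets (clusters) C_1, …, C_ℓ of {1,…,m}; for each r let Ω_r := diag(1_{C_r}) − (1/|C_r|) 1_{C_r} 1_{C_r}^T ∈ ℝ^{m×m}. Let G be the simple graph on vertex set {1,…,m} in which distinct vertices h and k are adjacent if and only if there exists r ∈ {1,…,ℓ} with h ∈ C_r and k ∈ C_r. Then the sum of the column spaces of Ω_1, …, Ω_ℓ equals the hyperplane ker 1^T = {x ∈ ℝ^m : 1^T x = 0} if and only if G is connected. -/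
open Matrix

/-!
The range of `Ω_C` consists of vectors supported on `C` with zero sum over `C`, and it contains
`e_h - e_k` for all `h, k ∈ C`. Hence the sum `V` of the ranges lies in `ker 1ᵀ` and contains
`e_h - e_k` whenever `h` and `k` are joined by a path in `G`. If `G` is connected, the vectors
`e_i - e_{i₀}` span `ker 1ᵀ`. If not, let `S` be the component of a vertex `h`: every cluster,
being a clique, lies inside `S` or misses it, so `x ↦ ∑_{i ∈ S} x_i` vanishes on `V`, but not on
`e_h - e_k ∈ ker 1ᵀ` for `k ∉ S`.
-/

open Finset

section Omega

variable {m : ℕ} (C : Finset (Fin m))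

theorem Omega_mulVec_apply (x : Fin m → ℝ) (i : Fin m) :
    (Omega C *ᵥ x) i = if i ∈ C then x i - (∑ j ∈ C, x j) / #C else 0 := by
  have hvec : (vecMulVec (fun i => if i ∈ C then (1 : ℝ) else 0)
      (fun i => if i ∈ C then (1 : ℝ) else 0) *ᵥ x) i
      = (if i ∈ C then (1 : ℝ) else 0) * ∑ j ∈ C, x j := by
    simp [mulVec, dotProduct, vecMulVec_apply, ite_mul, sum_ite_mem]
  simp only [Omega, sub_mulVec, Pi.sub_apply, mulVec_diagonal, smul_mulVec, Pi.smul_apply,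
    smul_eq_mul, hvec]
  split_ifs <;> ring

theorem Omega_mulVec_apply_of_notMem {i : Fin m} (hi : i ∉ C) (x : Fin m → ℝ) :
    (Omega C *ᵥ x) i = 0 := by
  simp [Omega_mulVec_apply, hi]

theorem sum_Omega_mulVec (x : Fin m → ℝ) : ∑ i ∈ C, (Omega C *ᵥ x) i = 0 := by
  rcases C.eq_empty_or_nonempty with rfl | hC
  · simp
  have hcard : (#C : ℝ) ≠ 0 := by exact_mod_cast hC.card_ne_zero
  rw [sum_congr rfl fun i hi => by rw [Omega_mulVec_apply, if_pos hi], sum_sub_distrib,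
    sum_const, nsmul_eq_mul, mul_div_cancel₀ _ hcard, sub_self]

theorem sum_Omega_mulVec_of_subset {S : Finset (Fin m)} (hCS : C ⊆ S) (x : Fin m → ℝ) :
    ∑ i ∈ S, (Omega C *ᵥ x) i = 0 := by
  rw [← sum_subset hCS fun i _ hi => Omega_mulVec_apply_of_notMem C hi x, sum_Omega_mulVec]

theorem sum_Omega_mulVec_of_disjoint {S : Finset (Fin m)} (hCS : Disjoint C S)
    (x : Fin m → ℝ) : ∑ i ∈ S, (Omega C *ᵥ x) i = 0 :=
  sum_eq_zero fun _ hi => Omega_mulVec_apply_of_notMem C (disjoint_right.1 hCS hi) x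

theorem Omega_mulVec_single_sub_single {h k : Fin m} (hh : h ∈ C) (hk : k ∈ C) :
    Omega C *ᵥ (Pi.single h 1 - Pi.single k 1) = Pi.single h 1 - Pi.single k 1 := by
  funext i
  have hsum : ∑ j ∈ C, (Pi.single h 1 - Pi.single k 1 : Fin m → ℝ) j = 0 := by
    simp [sum_sub_distrib, sum_pi_single', hh, hk]
  rw [Omega_mulVec_apply, hsum, zero_div, sub_zero]
  split_ifs with hi
  · rfl
  · have hih : i ≠ h := fun e => hi (e ▸ hh)
    have hik : i ≠ k := fun e => hi (e ▸ hk)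
    simp [hih, hik]

end Omega

section Graph

variable {α R : Type*} [DecidableEq α] [Ring R] {G : SimpleGraph α} {V : Submodule R (α → R)}

theorem SimpleGraph.IsClique.reachable {s : Set α} (hs : G.IsClique s) {i j : α} (hi : i ∈ s)
    (hj : j ∈ s) : G.Reachable i j := by
  by_cases hij : i = j
  · exact hij ▸ .refl i
  · exact (hs hi hj hij).reachable

theorem SimpleGraph.IsClique.subset_or_disjoint_reachable [Fintype α] [DecidableRel G.Adj]
    {s : Finset α} (hs : G.IsClique (s : Set α)) (h : α) :
    s ⊆ ({i | G.Reachable h i} : Finset α) ∨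
      Disjoint s ({i | G.Reachable h i} : Finset α) := by
  refine or_iff_not_imp_right.2 fun hmeet => ?_
  obtain ⟨i, his, hi⟩ := not_disjoint_iff.1 hmeet
  intro j hj
  simp only [mem_filter, mem_univ, true_and] at hi ⊢
  exact hi.trans (hs.reachable his hj)

theorem single_sub_single_mem_of_reachable
    (hV : ∀ h k, G.Adj h k → (Pi.single h 1 - Pi.single k 1 : α → R) ∈ V) {h k : α}
    (hr : G.Reachable h k) : (Pi.single h 1 - Pi.single k 1 : α → R) ∈ V := by
  obtain ⟨w⟩ := hr
  induction w with
  | nil => simp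
  | @cons a b c hab _ ih =>
    rw [← sub_add_sub_cancel _ (Pi.single b 1)]
    exact V.add_mem (hV a b hab) ih

theorem mem_of_sum_eq_zero_of_connected [Fintype α] (hG : G.Connected)
    (hV : ∀ h k, G.Adj h k → (Pi.single h 1 - Pi.single k 1 : α → R) ∈ V) {x : α → R}
    (hx : ∑ i, x i = 0) : x ∈ V := by
  obtain ⟨i₀⟩ := hG.nonempty
  have hdecomp : x = ∑ i, x i • (Pi.single i 1 - Pi.single i₀ 1 : α → R) := by
    rw [sum_congr rfl fun i _ => smul_sub (x i) _ _, sum_sub_distrib, ← sum_smul, hx, zero_smul,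
      sub_zero]
    exact pi_eq_sum_univ' x
  rw [hdecomp]
  exact V.sum_mem fun i _ =>
    V.smul_mem _ (single_sub_single_mem_of_reachable hV (hG.preconnected i i₀))

end Graph

section Clusters

variable {m : ℕ} {ι : Type*} (C : ι → Finset (Fin m))

theorem single_sub_single_mem_iSup_range_Omega {r : ι} {h k : Fin m} (hh : h ∈ C r)
    (hk : k ∈ C r) :
    Pi.single h 1 - Pi.single k 1 ∈ ⨆ r, LinearMap.range (Omega (C r)).mulVecLin :=
  Submodule.mem_iSup_of_mem r ⟨_, Omega_mulVec_single_sub_single (C r) hh hk⟩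

theorem sum_eq_zero_of_mem_iSup_range_Omega {S : Finset (Fin m)}
    (hS : ∀ r, C r ⊆ S ∨ Disjoint (C r) S) {x : Fin m → ℝ}
    (hx : x ∈ ⨆ r, LinearMap.range (Omega (C r)).mulVecLin) : ∑ i ∈ S, x i = 0 := by
  suffices ⨆ r, LinearMap.range (Omega (C r)).mulVecLin ≤
      LinearMap.ker (∑ i ∈ S, LinearMap.proj i : (Fin m → ℝ) →ₗ[ℝ] ℝ) by
    simpa using this hx
  refine iSup_le fun r => ?_
  rintro _ ⟨y, rfl⟩
  simp only [LinearMap.mem_ker, LinearMap.sum_apply, LinearMap.proj_apply, mulVecLin_apply]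
  exact (hS r).elim (sum_Omega_mulVec_of_subset _ · y) (sum_Omega_mulVec_of_disjoint _ · y)

end Clusters

/-- The sum of the column spaces of the `Ω_r` equals the hyperplane `ker 1ᵀ`
if and only if the graph in which `h ∼ k` whenever some cluster contains both `h` and `k`
is connected. -/
theorem span_iff_connected (m ℓ : ℕ) (hm : 1 ≤ m)
    (C : Fin ℓ → Finset (Fin m)) :
    let G : SimpleGraph (Fin m) :=
      { Adj := fun h k => h ≠ k ∧ ∃ r, h ∈ C r ∧ k ∈ C r
        symm := by
          constructor
          intro h k hk
          obtain ⟨hne, r, h1, h2⟩ := hk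
          exact ⟨hne.symm, r, h2, h1⟩
        loopless := by
          constructor
          intro h hk
          exact hk.1 rfl }
    ((⨆ r, LinearMap.range (Omega (C r)).mulVecLin)
        = LinearMap.ker (∑ i : Fin m, (LinearMap.proj i : (Fin m → ℝ) →ₗ[ℝ] ℝ)))
      ↔ G.Connected := by
  intro G
  have hker (x : Fin m → ℝ) :
      x ∈ LinearMap.ker (∑ i : Fin m, (LinearMap.proj i : (Fin m → ℝ) →ₗ[ℝ] ℝ)) ↔
        ∑ i, x i = 0 := by
    simp
  have hclique (r : Fin ℓ) : G.IsClique (C r : Set (Fin m)) :=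
    fun _ hi _ hj hij => ⟨hij, r, hi, hj⟩
  constructor
  · intro hV
    have : Nonempty (Fin m) := ⟨⟨0, hm⟩⟩
    refine ⟨fun h k => by_contra fun hhk => ?_⟩
    have hmem : (Pi.single h 1 - Pi.single k 1 : Fin m → ℝ) ∈ LinearMap.ker _ :=
      (hker _).2 (by simp [sum_sub_distrib])
    have hsum := sum_eq_zero_of_mem_iSup_range_Omega C
      (fun r => (hclique r).subset_or_disjoint_reachable h) (hV ▸ hmem)
    simp [sum_sub_distrib, sum_pi_single', hhk] at hsum
  · refine fun hG => le_antisymm (fun x hx => (hker x).2 ?_) fun x hx => ?_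
    · exact sum_eq_zero_of_mem_iSup_range_Omega C (fun _ => .inl (subset_univ _)) hx
    · have hedge : ∀ h k, G.Adj h k → (Pi.single h 1 - Pi.single k 1 : Fin m → ℝ) ∈ _ :=
        fun _ _ ⟨_, _, hh, hk⟩ => single_sub_single_mem_iSup_range_Omega C hh hk
      exact mem_of_sum_eq_zero_of_connected hG hedge ((hker x).1 hx)
end
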